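/- arXiv:1808.07037 — 9 statements merged into one kernel-verified Lean document; each statement's English description precedes it below -/
import Mathlib

section
/- Let H be a dense subspace of a Hilbert space and (·,·) another semi-inner product on H with kernel N = {x : (x,x)=0}, and let Λ : H → H/N be the quotient map onto the quotient pre-Hilbert space H_N with inner product induced by (·,·). Then there exists a positive operator L : H → H̄ (into the completion) with (x,y) = ⟨x, L y⟩ for all x,y ∈ H if and only if Λ has a weak adjoint Λ* : H_N → H̄, i.e., there is a linear map Λ* with ⟨Λ x, z⟩ = ⟨x, Λ* z⟩ for all x ∈ H, z ∈ H_N. -/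
/-!
Every vector of the kernel `N` of the semi-inner product `B` is `B`-orthogonal to all of `H`, by
Cauchy–Schwarz for `B`. So if `B x y = ⟪x, L y⟫`, then `L y` is orthogonal to the dense range of
`H` whenever `y ∈ N`, hence `L` vanishes on `N` and factors through `H ⧸ N`; the factor is the weak
adjoint `Λ*`. Conversely `L := Λ* ∘ Λ` represents `B`, and it is positive because `B` is.
-/

open scoped InnerProductSpace ComplexOrder
open RCLike ComplexConjugate

section SesqForm

variable {𝕜 E : Type*} [RCLike 𝕜] [AddCommGroup E] [Module 𝕜 E]

abbrev LinearMap.toPreInnerProductSpaceCore (B : E →ₗ⋆[𝕜] E →ₗ[𝕜] 𝕜)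
    (hherm : ∀ x y, B x y = conj (B y x)) (hnonneg : ∀ x, 0 ≤ re (B x x)) :
    PreInnerProductSpace.Core 𝕜 E where
  inner x y := B x y
  conj_inner_symm x y := (hherm x y).symm
  re_inner_nonneg := hnonneg
  add_left x y z := by simp
  smul_left x y r := by simp

theorem LinearMap.apply_eq_zero_of_apply_self_eq_zero (B : E →ₗ⋆[𝕜] E →ₗ[𝕜] 𝕜)
    (hherm : ∀ x y, B x y = conj (B y x)) (hnonneg : ∀ x, 0 ≤ re (B x x)) {y : E}
    (hy : B y y = 0) (x : E) : B x y = 0 := by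
  have hcs : ‖B x y‖ * ‖B y x‖ ≤ re (B x x) * re (B y y) :=
    InnerProductSpace.Core.inner_mul_inner_self_le
      (c := B.toPreInnerProductSpaceCore hherm hnonneg) x y
  rw [hy, map_zero, mul_zero, hherm y x, norm_conj, ← sq] at hcs
  simpa using le_antisymm hcs (sq_nonneg _)

theorem LinearMap.map_eq_zero_of_forall_apply_eq_inner {F : Type*}
    [NormedAddCommGroup F] [InnerProductSpace 𝕜 F] {ι : E → F} (hdense : DenseRange ι)
    (B : E →ₗ⋆[𝕜] E →ₗ[𝕜] 𝕜) (hherm : ∀ x y, B x y = conj (B y x))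
    (hnonneg : ∀ x, 0 ≤ re (B x x)) (L : E →ₗ[𝕜] F) (hL : ∀ x y, B x y = ⟪ι x, L y⟫_𝕜)
    {y : E} (hy : B y y = 0) : L y = 0 :=
  hdense.eq_zero_of_inner_right 𝕜 fun x ↦ by
    rw [← hL]
    exact B.apply_eq_zero_of_apply_self_eq_zero hherm hnonneg hy x

end SesqForm

theorem adj_iff_pos_general {H : Type*} [NormedAddCommGroup H] [InnerProductSpace ℂ H]
    {Hb : Type*} [NormedAddCommGroup Hb] [InnerProductSpace ℂ Hb]
    (ι : H →ₗᵢ[ℂ] Hb) (hdense : DenseRange ι)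
    (B : H →ₗ⋆[ℂ] H →ₗ[ℂ] ℂ)
    (hherm : ∀ x y : H, B x y = starRingEnd ℂ (B y x))
    (hpsd : ∀ x : H, 0 ≤ B x x)
    (N : Submodule ℂ H) (hN : (N : Set H) = {x : H | B x x = 0}) :
    (∃ L : H →ₗ[ℂ] Hb, (∀ x : H, 0 ≤ ⟪ι x, L x⟫_ℂ) ∧
        ∀ x y : H, B x y = ⟪ι x, L y⟫_ℂ) ↔
      (∃ Λs : (H ⧸ N) →ₗ[ℂ] Hb,
        ∀ x y : H, B x y = ⟪ι x, Λs (Submodule.Quotient.mk y)⟫_ℂ) := by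
  have hnonneg (x : H) : 0 ≤ (B x x).re := (Complex.nonneg_iff.mp (hpsd x)).1
  constructor
  · rintro ⟨L, -, hL⟩
    have hNL : N ≤ LinearMap.ker L := fun y hy ↦
      B.map_eq_zero_of_forall_apply_eq_inner hdense hherm hnonneg L hL
        (by simpa [← SetLike.mem_coe, hN] using hy)
    exact ⟨N.liftQ L hNL, hL⟩
  · rintro ⟨Λs, hΛ⟩
    refine ⟨Λs ∘ₗ N.mkQ, fun x ↦ ?_, hΛ⟩
    simpa [← hΛ] using hpsd x

/-- Let `H` be a pre-Hilbert space, densely and isometrically embedded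
(via `ι`) into a Hilbert space `Hb` (its completion), and let `B` be another semi-inner
product on `H` (a positive-semidefinite hermitian sesquilinear form) with kernel
`N = {x | B x x = 0}`, and let `Λ : H → H/N =: H_N` be the quotient map, so that the
inner product induced by `B` on `H_N` satisfies `⟨Λx, Λy⟩ = B x y`.  Then there is a
positive operator `L : H → Hb` with `B x y = ⟪x, Ly⟫` for all `x, y` if and only if
`Λ` has a weak adjoint `Λ* : H_N → Hb`, i.e. a linear map with
`⟨Λx, z⟩ = ⟪x, Λ* z⟫` for all `x ∈ H`, `z ∈ H_N` (equivalently, taking `z = Λ y`,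
`B x y = ⟪x, Λ*(Λ y)⟫` for all `x, y ∈ H`). -/
theorem adj_iff_pos {H : Type*} [NormedAddCommGroup H] [InnerProductSpace ℂ H]
    {Hb : Type*} [NormedAddCommGroup Hb] [InnerProductSpace ℂ Hb] [CompleteSpace Hb]
    (ι : H →ₗᵢ[ℂ] Hb) (hdense : DenseRange ι)
    (B : H →ₗ⋆[ℂ] H →ₗ[ℂ] ℂ)
    (hherm : ∀ x y : H, B x y = starRingEnd ℂ (B y x))
    (hpsd : ∀ x : H, 0 ≤ B x x)
    (N : Submodule ℂ H) (hN : (N : Set H) = {x : H | B x x = 0}) :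
    (∃ L : H →ₗ[ℂ] Hb, (∀ x : H, 0 ≤ ⟪ι x, L x⟫_ℂ) ∧
        ∀ x y : H, B x y = ⟪ι x, L y⟫_ℂ) ↔
      (∃ Λs : (H ⧸ N) →ₗ[ℂ] Hb,
        ∀ x y : H, B x y = ⟪ι x, Λs (Submodule.Quotient.mk y)⟫_ℂ) :=
  adj_iff_pos_general ι hdense B hherm hpsd N hN
end

section
/- Let H be the complex vector space with Hamel basis (e_t)_{t∈[0,1]} and define the linear functional Φ on the algebraic tensor product H ⊗ H by Φ(e_s ⊗ e_t) = 1/(s−t) for s ≠ t and Φ(e_t ⊗ e_t) = 0. Then for every norm ‖·‖ on H and every subcross norm on H ⊗ H (i.e., ‖x ⊗ y‖ ≤ ‖x‖·‖y‖), the functional Φ is unbounded. -/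
open TensorProduct

lemma seminorm_nonneg' {E : Type*} [AddCommGroup E] [Module ℂ E] (p : Seminorm ℂ E) (v : E) :
    0 ≤ p v := by
  have h0 : p 0 = 0 := p.map_zero'
  have hadd : p (v + -v) ≤ p v + p (-v) := p.add_le' v (-v)
  have hneg : p (-v) = p v := p.neg' v
  rw [add_neg_cancel, h0, hneg] at hadd
  linarith

lemma exists_close_of_infinite {S : Set ℝ} (hS : S.Infinite) (hb : S ⊆ Set.Icc 0 1)
    {ε : ℝ} (hε : 0 < ε) : ∃ s ∈ S, ∃ t ∈ S, s ≠ t ∧ |s - t| < ε := by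
  have hmap : Set.MapsTo (fun x : ℝ => ⌊x / ε⌋) S (Set.Icc 0 ⌊1 / ε⌋) := by
    intro x hx
    obtain ⟨hx0, hx1⟩ := hb hx
    constructor
    · exact Int.floor_nonneg.mpr (div_nonneg hx0 hε.le)
    · apply Int.floor_le_floor
      gcongr
  obtain ⟨s, hs, t, ht, hst, heq⟩ :=
    hS.exists_ne_map_eq_of_mapsTo hmap (Set.finite_Icc _ _)
  refine ⟨s, hs, t, ht, hst, ?_⟩
  have h1 : |s / ε - t / ε| < 1 := Int.abs_sub_lt_one_of_floor_eq_floor heq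
  have h2 : |s - t| / ε < 1 := by
    rwa [div_sub_div_same, abs_div, abs_of_pos hε] at h1
  calc |s - t| = |s - t| / ε * ε := by field_simp
    _ < 1 * ε := mul_lt_mul_of_pos_right h2 hε
    _ = ε := one_mul ε

/-- Let `H` be the complex vector space with Hamel basis
`(e_t)_{t ∈ [0,1]}` (realized as `H = ([0,1] →₀ ℂ)`, `e t = single t 1`) and let
`Φ : H ⊗ H → ℂ` be the linear functional with `Φ(e_s ⊗ e_t) = 1/(s−t)` for `s ≠ t` and
`Φ(e_t ⊗ e_t) = 0`.  Then for every norm `n1` on `H` and every subcross norm `n2` on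
`H ⊗ H` (i.e. `n2 (x ⊗ y) ≤ n1 x · n1 y`), the functional `Φ` is unbounded. -/
theorem diagonal_functional_unbounded
    (Φ : ((Set.Icc (0:ℝ) 1 →₀ ℂ) ⊗[ℂ] (Set.Icc (0:ℝ) 1 →₀ ℂ)) →ₗ[ℂ] ℂ)
    (hΦ : ∀ s t : Set.Icc (0:ℝ) 1,
      Φ (Finsupp.single s (1:ℂ) ⊗ₜ[ℂ] Finsupp.single t (1:ℂ)) =
        if s = t then 0 else (((s : ℝ) - (t : ℝ) : ℝ) : ℂ)⁻¹)
    (n1 : Seminorm ℂ (Set.Icc (0:ℝ) 1 →₀ ℂ))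
    (hn1 : ∀ x, n1 x = 0 → x = 0)
    (n2 : Seminorm ℂ ((Set.Icc (0:ℝ) 1 →₀ ℂ) ⊗[ℂ] (Set.Icc (0:ℝ) 1 →₀ ℂ)))
    (hn2 : ∀ v : (Set.Icc (0:ℝ) 1 →₀ ℂ) ⊗[ℂ] (Set.Icc (0:ℝ) 1 →₀ ℂ), n2 v = 0 → v ∈ (⊥ : Submodule ℂ ((Set.Icc (0:ℝ) 1 →₀ ℂ) ⊗[ℂ] (Set.Icc (0:ℝ) 1 →₀ ℂ))))
    (hsub : ∀ x y, n2 (x ⊗ₜ[ℂ] y) ≤ n1 x * n1 y) :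
    ¬ ∃ C : ℝ, ∀ v : (Set.Icc (0:ℝ) 1 →₀ ℂ) ⊗[ℂ] (Set.Icc (0:ℝ) 1 →₀ ℂ), ‖Φ v‖ ≤ C * n2 v := by
  rintro ⟨C, hC⟩
  -- norm of Φ on basis tensors for s ≠ t
  have hΦnorm : ∀ s t : Set.Icc (0:ℝ) 1, s ≠ t →
      ‖Φ (Finsupp.single s (1:ℂ) ⊗ₜ[ℂ] Finsupp.single t (1:ℂ))‖ = |(s : ℝ) - (t : ℝ)|⁻¹ := by
    intro s t hst
    rw [hΦ s t, if_neg hst, norm_inv, Complex.norm_real, Real.norm_eq_abs]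
  -- C is positive
  have hzo : (⟨0, by norm_num⟩ : Set.Icc (0:ℝ) 1) ≠ (⟨1, by norm_num⟩ : Set.Icc (0:ℝ) 1) := by
    intro h; simpa using congrArg Subtype.val h
  have hCpos : 0 < C := by
    have h1 := hC (Finsupp.single (⟨0, by norm_num⟩ : Set.Icc (0:ℝ) 1) (1:ℂ) ⊗ₜ[ℂ]
      Finsupp.single (⟨1, by norm_num⟩ : Set.Icc (0:ℝ) 1) (1:ℂ))
    rw [hΦnorm _ _ hzo] at h1
    have hnn : (0:ℝ) ≤ n2 (Finsupp.single (⟨0, by norm_num⟩ : Set.Icc (0:ℝ) 1) (1:ℂ) ⊗ₜ[ℂ]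
      Finsupp.single (⟨1, by norm_num⟩ : Set.Icc (0:ℝ) 1) (1:ℂ)) := seminorm_nonneg' n2 _
    have habs : |((⟨0, by norm_num⟩ : Set.Icc (0:ℝ) 1) : ℝ) -
        ((⟨1, by norm_num⟩ : Set.Icc (0:ℝ) 1) : ℝ)|⁻¹ = 1 := by norm_num
    rw [habs] at h1
    nlinarith
  -- some level set is infinite
  have hSinf : ∃ N : ℕ, {t : Set.Icc (0:ℝ) 1 | n1 (Finsupp.single t (1:ℂ)) ≤ N}.Infinite := by
    by_contra h
    push_neg at h
    have hcover : (Set.univ : Set (Set.Icc (0:ℝ) 1)) =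
        ⋃ N : ℕ, {t : Set.Icc (0:ℝ) 1 | n1 (Finsupp.single t (1:ℂ)) ≤ N} := by
      ext t
      simp only [Set.mem_univ, Set.mem_iUnion, Set.mem_setOf_eq, true_iff]
      exact exists_nat_ge _
    have hcnt : (Set.univ : Set (Set.Icc (0:ℝ) 1)).Countable := by
      rw [hcover]; exact Set.countable_iUnion (fun N => (h N).countable)
    have : Countable (Set.Icc (0:ℝ) 1) := Set.countable_univ_iff.mp hcnt
    have hcard : Cardinal.mk (Set.Icc (0:ℝ) 1) = Cardinal.continuum :=
      Cardinal.mk_Icc_real (by norm_num)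
    have hle : Cardinal.mk (Set.Icc (0:ℝ) 1) ≤ Cardinal.aleph0 := Cardinal.mk_le_aleph0
    rw [hcard] at hle
    exact absurd hle (not_le.mpr Cardinal.aleph0_lt_continuum)
  obtain ⟨N, hN⟩ := hSinf
  -- get two close points in the level set
  have hSinf' : (Subtype.val '' {t : Set.Icc (0:ℝ) 1 | n1 (Finsupp.single t (1:ℂ)) ≤ N}).Infinite :=
    hN.image (Set.injOn_of_injective Subtype.val_injective)
  have hSsub : (Subtype.val '' {t : Set.Icc (0:ℝ) 1 | n1 (Finsupp.single t (1:ℂ)) ≤ N})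
      ⊆ Set.Icc 0 1 := by
    rintro x ⟨t, _, rfl⟩; exact t.2
  have hε : (0:ℝ) < (C * N ^ 2 + 1)⁻¹ := by positivity
  obtain ⟨s, hs, t, ht, hst, hclose⟩ := exists_close_of_infinite hSinf' hSsub hε
  obtain ⟨s', hs', rfl⟩ := hs
  obtain ⟨t', ht', rfl⟩ := ht
  have hst' : s' ≠ t' := fun h => hst (congrArg Subtype.val h)
  have habs : (0:ℝ) < |(s' : ℝ) - (t' : ℝ)| := by
    rw [abs_pos, sub_ne_zero]; exact hst
  have hbig : C * (N:ℝ) ^ 2 + 1 < |(s' : ℝ) - (t' : ℝ)|⁻¹ := by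
    rw [← inv_inv (C * (N:ℝ) ^ 2 + 1)]
    exact inv_strictAnti₀ habs hclose
  have hbound := hC (Finsupp.single s' (1:ℂ) ⊗ₜ[ℂ] Finsupp.single t' (1:ℂ))
  rw [hΦnorm _ _ hst'] at hbound
  have hsub' : n2 (Finsupp.single s' (1:ℂ) ⊗ₜ[ℂ] Finsupp.single t' (1:ℂ)) ≤ (N:ℝ) * N :=
    le_trans (hsub _ _) (mul_le_mul hs' ht' (seminorm_nonneg' n1 _) (Nat.cast_nonneg N))
  nlinarith [mul_le_mul_of_nonneg_left hsub' hCpos.le]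
end

section
/- There exist pre-Hilbert spaces G, H (both with orthonormal Hamel basis (e_n)_{n∈ℕ}) and K = ℂ, and linear operators a : G → H, b : H → K, with a*e_n := n e_n and b e_n := 1/n, such that both a and b are (weakly) adjointable but the composition c = b ∘ a : e_n ↦ 1 is unbounded on its domain and is not closeable (in particular not weakly adjointable). -/
open scoped InnerProductSpace
open Filter Topology

/-! `a` is diagonal in the orthonormal basis with real eigenvalues, hence symmetric, and `b` is
bounded because its values on the basis are square-summable (`∑ 1/n² < ∞`): on a finite
combination `x`, `b x = ⟪z, x⟫` with `‖z‖² ≤ ∑ 1/n²`. But `c = b ∘ a` is `1` on every `e_n`,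
hence `1` on the averages `x_k = k⁻¹ (e_1 + ⋯ + e_k)`, whose norms `k^{-1/2}` tend to `0`;
a bounded `c` would send them to `0`. -/

theorem LinearMap.tendsto_map_average_range {𝕜 E F : Type*} [RCLike 𝕜] [AddCommGroup E]
    [Module 𝕜 E] [AddCommGroup F] [Module 𝕜 F] [TopologicalSpace F] (f : E →ₗ[𝕜] F)
    {v : ℕ → E} {y : F} (hf : ∀ n, f (v n) = y) :
    Tendsto (fun k : ℕ => f ((k : 𝕜)⁻¹ • ∑ n ∈ Finset.range k, v n)) atTop (𝓝 y) := by
  refine tendsto_const_nhds.congr' (eventually_ne_atTop 0 |>.mono fun k hk => ?_)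
  dsimp only
  rw [eq_comm, map_smul, map_sum, Finset.sum_congr rfl fun n _ => hf n, Finset.sum_const,
    Finset.card_range, ← Nat.cast_smul_eq_nsmul 𝕜, smul_smul,
    inv_mul_cancel₀ (Nat.cast_ne_zero.mpr hk), one_smul]

theorem LinearMap.eq_zero_of_tendsto_of_bound {𝕜 E F : Type*} [RCLike 𝕜]
    [SeminormedAddCommGroup E] [NormedSpace 𝕜 E] [NormedAddCommGroup F] [NormedSpace 𝕜 F]
    {f : E →ₗ[𝕜] F} {C : ℝ} (hC : ∀ x, ‖f x‖ ≤ C * ‖x‖) {x : ℕ → E} {y : F}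
    (hx : Tendsto x atTop (𝓝 0)) (hfx : Tendsto (fun k => f (x k)) atTop (𝓝 y)) : y = 0 :=
  tendsto_nhds_unique hfx <| by
    simpa [Function.comp_def] using ((f.mkContinuous C hC).continuous.tendsto 0).comp hx

section

variable {𝕜 E ι : Type*} [RCLike 𝕜] [NormedAddCommGroup E] [InnerProductSpace 𝕜 E]

theorem LinearMap.IsSymmetric.of_span_eq_top {s : Set E} (hs : Submodule.span 𝕜 s = ⊤)
    {T : E →ₗ[𝕜] E} (hT : ∀ x ∈ s, ∀ y ∈ s, ⟪T x, y⟫_𝕜 = ⟪x, T y⟫_𝕜) : T.IsSymmetric := by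
  have hforms : (innerₛₗ 𝕜).comp T = (innerₛₗ 𝕜).compl₂ T :=
    LinearMap.ext_on hs fun x hx => LinearMap.ext_on hs fun y hy => hT x hx y hy
  exact fun x y => LinearMap.congr_fun₂ hforms x y

theorem Orthonormal.isSymmetric_of_apply_eq_smul {e : ι → E} (he : Orthonormal 𝕜 e)
    (hspan : Submodule.span 𝕜 (Set.range e) = ⊤) {T : E →ₗ[𝕜] E} (μ : ι → ℝ)
    (hT : ∀ i, T (e i) = (μ i : 𝕜) • e i) : T.IsSymmetric := by
  refine .of_span_eq_top hspan ?_
  rintro _ ⟨i, rfl⟩ _ ⟨j, rfl⟩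
  rw [hT, hT, inner_smul_left, inner_smul_right, RCLike.conj_ofReal]
  rcases eq_or_ne i j with rfl | hij
  · rfl
  · simp [he.inner_eq_zero hij]

theorem Orthonormal.norm_sum_smul_sq {e : ι → E} (he : Orthonormal 𝕜 e) (l : ι → 𝕜)
    (s : Finset ι) : ‖∑ i ∈ s, l i • e i‖ ^ 2 = ∑ i ∈ s, ‖l i‖ ^ 2 := by
  rw [← inner_self_eq_norm_sq (𝕜 := 𝕜), he.inner_sum, map_sum]
  refine Finset.sum_congr rfl fun i _ => ?_
  rw [RCLike.conj_mul]
  norm_cast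

theorem Orthonormal.exists_bound_of_summable_norm_sq {e : ι → E} (he : Orthonormal 𝕜 e)
    (hspan : Submodule.span 𝕜 (Set.range e) = ⊤) (f : E →ₗ[𝕜] 𝕜)
    (hf : Summable fun i => ‖f (e i)‖ ^ 2) : ∃ C : ℝ, ∀ x, ‖f x‖ ≤ C * ‖x‖ := by
  classical
  refine ⟨√(∑' i, ‖f (e i)‖ ^ 2), fun x => ?_⟩
  obtain ⟨l, rfl⟩ :=
    Finsupp.mem_span_range_iff_exists_finsupp.mp (hspan ▸ Submodule.mem_top (x := x))
  rw [Finsupp.sum]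
  set z := ∑ i ∈ l.support, (starRingEnd 𝕜) (f (e i)) • e i
  have hz : ⟪z, ∑ i ∈ l.support, l i • e i⟫_𝕜 = f (∑ i ∈ l.support, l i • e i) := by
    simp [z, he.inner_sum, map_sum, mul_comm]
  have hz_norm : ‖z‖ ≤ √(∑' i, ‖f (e i)‖ ^ 2) := by
    refine Real.le_sqrt_of_sq_le ?_
    rw [he.norm_sum_smul_sq]
    simpa using hf.sum_le_tsum l.support fun i _ => by positivity
  calc ‖f (∑ i ∈ l.support, l i • e i)‖ = ‖⟪z, ∑ i ∈ l.support, l i • e i⟫_𝕜‖ := by rw [hz]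
    _ ≤ ‖z‖ * ‖∑ i ∈ l.support, l i • e i‖ := norm_inner_le_norm _ _
    _ ≤ _ := by gcongr

theorem Orthonormal.norm_average_range {v : ℕ → E} (hv : Orthonormal 𝕜 v) (k : ℕ) :
    ‖(k : 𝕜)⁻¹ • ∑ n ∈ Finset.range k, v n‖ = (√k)⁻¹ := by
  have hsum : ‖∑ n ∈ Finset.range k, v n‖ = √k := by
    rw [← Real.sqrt_sq (norm_nonneg _)]
    simpa using congrArg Real.sqrt (hv.norm_sum_smul_sq (fun _ => 1) (Finset.range k))
  rw [norm_smul, hsum, norm_inv, RCLike.norm_natCast]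
  rcases Nat.eq_zero_or_pos k with rfl | hk
  · simp
  · have : (0 : ℝ) < √k := by positivity
    field_simp
    rw [Real.sq_sqrt k.cast_nonneg]

theorem Orthonormal.tendsto_average_range_zero {v : ℕ → E} (hv : Orthonormal 𝕜 v) :
    Tendsto (fun k : ℕ => (k : 𝕜)⁻¹ • ∑ n ∈ Finset.range k, v n) atTop (𝓝 0) := by
  rw [tendsto_zero_iff_norm_tendsto_zero]
  simp only [hv.norm_average_range]
  exact tendsto_inv_atTop_zero.comp (Real.tendsto_sqrt_atTop.comp tendsto_natCast_atTop_atTop)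

end

/-- On a pre-Hilbert space `H = span{e_n : n ≥ 1}` with orthonormal
(Hamel) basis `(e_n)` consider the linear operators `a : H → H`, `a e_n = n e_n`, and
`b : H → ℂ`, `b e_n = 1/n`.  Then `a` is weakly adjointable (indeed symmetric) and `b` is
weakly adjointable (indeed bounded), but the composition `c = b ∘ a : e_n ↦ 1` is
unbounded—hence not weakly adjointable—and moreover not closeable: there is a sequence
`x_k → 0` with `c x_k → 1 ≠ 0`. -/
theorem comp_of_adjointable_not_closeable {H : Type*} [NormedAddCommGroup H]
    [InnerProductSpace ℂ H] (e : ℕ+ → H) (he : Orthonormal ℂ e)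
    (hspan : Submodule.span ℂ (Set.range e) = ⊤)
    (a : H →ₗ[ℂ] H) (ha : ∀ n : ℕ+, a (e n) = (n : ℂ) • e n)
    (b : H →ₗ[ℂ] ℂ) (hb : ∀ n : ℕ+, b (e n) = 1 / (n : ℂ)) :
    (∀ x y : H, ⟪a x, y⟫_ℂ = ⟪x, a y⟫_ℂ) ∧
    (∃ C : ℝ, ∀ x : H, ‖b x‖ ≤ C * ‖x‖) ∧
    (¬ ∃ C : ℝ, ∀ x : H, ‖b (a x)‖ ≤ C * ‖x‖) ∧
    (∃ x : ℕ → H, Filter.Tendsto x Filter.atTop (nhds 0) ∧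
      Filter.Tendsto (fun k => b (a (x k))) Filter.atTop (nhds 1) ∧ (1 : ℂ) ≠ 0) := by
  have hba : ∀ n, (b ∘ₗ a) (e n) = 1 := fun n => by simp [ha, hb]
  have hv : Orthonormal ℂ (e ∘ Nat.succPNat) := he.comp _ Nat.succPNat_injective
  have hx := hv.tendsto_average_range_zero
  have hbax := (b ∘ₗ a).tendsto_map_average_range fun n => hba (Nat.succPNat n)
  have hb_summable : Summable fun n : ℕ+ => ‖b (e n)‖ ^ 2 := by
    simpa [hb, Function.comp_def] using
      (Real.summable_one_div_nat_pow.mpr one_lt_two).comp_injective PNat.coe_injective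
  refine ⟨he.isSymmetric_of_apply_eq_smul hspan (fun n => n) (by simpa using ha),
    he.exists_bound_of_summable_norm_sq hspan b hb_summable,
    fun ⟨C, hC⟩ => one_ne_zero ((b ∘ₗ a).eq_zero_of_tendsto_of_bound hC hx hbax),
    _, hx, hbax, one_ne_zero⟩
end

section
/- Let H = span{e_n : n ∈ ℕ} with (e_n) orthonormal. The linear map T : H → H defined by T e_n := e_n + n e_1 is bijective, but T is not weakly adjointable: there is no vector z in the Hilbert space completion of H with ⟨z, e_n⟩ = ⟨e_1, T e_n⟩ for all n. -/
open scoped InnerProductSpace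

/-!
On the basis `(e n)`, `T` is the rank-one perturbation `x ↦ x + φ x • e 1` of the identity,
where `φ` is the linear form with `φ (e n) = n`; since `1 + φ (e 1) = 2 ≠ 0` it is invertible
(a dilatransvection). On the other hand `⟪e 1, T (e n)⟫ = n` for `n ≠ 1`, while a vector `z`
of any inner product space satisfies `‖⟪z, u⟫‖ ≤ ‖z‖` for every unit vector `u`, so no `z`
can have these inner products against the orthonormal family `ι ∘ e`.
-/

section

variable {𝕜 E ι : Type*} [RCLike 𝕜] [SeminormedAddCommGroup E] [InnerProductSpace 𝕜 E]

theorem Orthonormal.not_exists_inner_eq_of_not_bddAbove {v : ι → E} (hv : Orthonormal 𝕜 v)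
    {f : ι → 𝕜} (hf : ¬BddAbove (Set.range fun i => ‖f i‖)) :
    ¬∃ z : E, ∀ i, ⟪z, v i⟫_𝕜 = f i := by
  rintro ⟨z, hz⟩
  refine hf ⟨‖z‖, ?_⟩
  rintro _ ⟨i, rfl⟩
  simpa [← hz i, hv.1 i] using norm_inner_le_norm z (v i)

theorem Orthonormal.not_bddAbove_norm_inner_add_natCast_smul {e : ℕ+ → E}
    (he : Orthonormal 𝕜 e) :
    ¬BddAbove (Set.range fun n : ℕ+ => ‖⟪e 1, e n + (n : 𝕜) • e 1⟫_𝕜‖) := by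
  rw [not_bddAbove_iff]
  intro C
  obtain ⟨m, hm⟩ := exists_nat_gt C
  let n : ℕ+ := (m + 1).succPNat
  have hn : (1 : ℕ+) ≠ n := by simp [n, ← PNat.coe_inj]
  refine ⟨_, ⟨n, rfl⟩, ?_⟩
  have hinner : ⟪e 1, e n + (n : 𝕜) • e 1⟫_𝕜 = n := by
    rw [inner_add_right, inner_smul_right, he.2 hn, inner_self_eq_norm_sq_to_K, he.1 1]
    simp
  dsimp only
  rw [hinner, RCLike.norm_natCast, Nat.succPNat_coe]
  push_cast
  linarith

end

theorem bijective_not_weakly_adjointable_general {H : Type*} [NormedAddCommGroup H]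
    [InnerProductSpace ℂ H] (e : ℕ+ → H) (he : Orthonormal ℂ e)
    (hspan : Submodule.span ℂ (Set.range e) = ⊤)
    (T : H →ₗ[ℂ] H) (hT : ∀ n : ℕ+, T (e n) = e n + (n : ℂ) • e 1)
    {Hb : Type*} [NormedAddCommGroup Hb] [InnerProductSpace ℂ Hb]
    (ι : H →ₗᵢ[ℂ] Hb) :
    Function.Bijective T ∧
      ¬ ∃ z : Hb, ∀ n : ℕ+, ⟪z, ι (e n)⟫_ℂ = ⟪ι (e 1), ι (T (e n))⟫_ℂ := by
  let b := Module.Basis.mk he.linearIndependent hspan.ge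
  let φ : Module.Dual ℂ H := b.constr ℂ fun n => (n : ℂ)
  have hφ : ∀ n, φ (e n) = n := fun n => by simpa [b] using b.constr_basis ℂ _ n
  have hTφ : T = LinearMap.transvection φ (e 1) :=
    b.ext fun n => by simp [b, hT, hφ, LinearMap.transvection.apply]
  refine ⟨?_, (he.comp_linearIsometry ι).not_exists_inner_eq_of_not_bddAbove ?_⟩
  · have hunit : IsUnit (1 + φ (e 1)) := by norm_num [hφ]
    rw [hTφ]
    exact (LinearEquiv.dilatransvection hunit).bijective
  · simpa only [Function.comp_apply, ι.inner_map_map, hT] using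
      he.not_bddAbove_norm_inner_add_natCast_smul

/-- On the pre-Hilbert space `H = span{e_n : n ≥ 1}` with orthonormal
Hamel basis `(e_n)`, the linear map `T` with `T e_n = e_n + n e_1` is bijective, but `T`
is not weakly adjointable: in the Hilbert space completion `Hb` of `H` (embedded via the
dense isometry `ι`) there is no vector `z` with `⟪z, e_n⟫ = ⟪e_1, T e_n⟫` for all `n`. -/
theorem bijective_not_weakly_adjointable {H : Type*} [NormedAddCommGroup H]
    [InnerProductSpace ℂ H] (e : ℕ+ → H) (he : Orthonormal ℂ e)
    (hspan : Submodule.span ℂ (Set.range e) = ⊤)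
    (T : H →ₗ[ℂ] H) (hT : ∀ n : ℕ+, T (e n) = e n + (n : ℂ) • e 1)
    {Hb : Type*} [NormedAddCommGroup Hb] [InnerProductSpace ℂ Hb] [CompleteSpace Hb]
    (ι : H →ₗᵢ[ℂ] Hb) (hdense : DenseRange ι) :
    Function.Bijective T ∧
      ¬ ∃ z : Hb, ∀ n : ℕ+, ⟪z, ι (e n)⟫_ℂ = ⟪ι (e 1), ι (T (e n))⟫_ℂ :=
  bijective_not_weakly_adjointable_general e he hspan T hT ι
end

section
/- In the completed one-mode full Fock space F̄(ℂ) = ℓ²(ℕ₀) with orthonormal basis (e_n)_{n≥0}, the exponential vectors ε(z) := Σ_{n≥0} (z^n/√(n!)) e_n for z ∈ ℂ form a linearly independent family. Consequently, for H := span{ε(z) : z ≠ 0}, the orthogonal projection Ω Ω* onto ℂe_0, restricted to H, does not map H into H (it is a weak projection on H that is not a projection of H). -/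
open scoped InnerProductSpace

/-!
The coordinates `⟪eₙ, ε(z)⟫ = zⁿ/√n!` identify `ε`, up to rescaling each coordinate, with
`z ↦ (zⁿ)ₙ`, and the functions `n ↦ zⁿ` are distinct characters of `(ℕ, +)`, hence linearly
independent by Dedekind's theorem. Since `Ω = ε(0)` and `⟪Ω, ε(1)⟫ = 1`, the projection `ΩΩ*`
sends `ε(1) ∈ H` to `ε(0)`, which lies outside `span{ε(z) : z ≠ 0}` by linear independence.
-/

theorem linearIndependent_pow_functions (K : Type*) [CommRing K] [IsDomain K] :
    LinearIndependent K (fun a : K => fun n : ℕ => a ^ n) :=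
  (linearIndependent_monoidHom (Multiplicative ℕ) K).comp (powersHom K) fun a a' h => by
    simpa using DFunLike.congr_fun h (Multiplicative.ofAdd 1)

theorem linearIndependent_pow_div {K : Type*} [Field K] {d : ℕ → K} (hd : ∀ n, d n ≠ 0) :
    LinearIndependent K (fun a : K => fun n : ℕ => a ^ n / d n) := by
  let scale : (ℕ → K) →ₗ[K] ℕ → K := LinearMap.pi fun n => d n • LinearMap.proj n
  refine .of_comp scale ?_
  have hcomp : scale ∘ (fun a n => a ^ n / d n) = fun a n => a ^ n := by
    ext a n
    simp [scale, mul_div_cancel₀ _ (hd n)]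
  rw [hcomp]
  exact linearIndependent_pow_functions K

theorem HilbertBasis.inner_tsum_smul {ι 𝕜 E : Type*} [RCLike 𝕜] [NormedAddCommGroup E]
    [InnerProductSpace 𝕜 E] (b : HilbertBasis ι 𝕜 E) {c : ι → 𝕜} (hc : Memℓp c 2) (i : ι) :
    ⟪b i, ∑' j, c j • b j⟫_𝕜 = c i := by
  rw [(b.hasSum_repr_symm ⟨c, hc⟩).tsum_eq, ← b.repr_apply_apply,
    LinearIsometryEquiv.apply_symm_apply]

theorem memℓp_two_pow_div_sqrt_factorial (z : ℂ) :
    Memℓp (fun n : ℕ => z ^ n / (Real.sqrt n.factorial : ℂ)) 2 := by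
  refine memℓp_gen ?_
  convert Real.summable_pow_div_factorial (‖z‖ ^ 2) using 2 with n
  rw [norm_div, norm_pow, Complex.norm_real, Real.norm_of_nonneg (Real.sqrt_nonneg _)]
  simp [div_pow, ← pow_mul, mul_comm]

theorem expVec_linearIndependent_and_vacuum_proj_not_invariant_general
    {F : Type*} [NormedAddCommGroup F] [InnerProductSpace ℂ F]
    (b : HilbertBasis ℕ ℂ F)
    (ε : ℂ → F)
    (hε : ∀ z : ℂ, ε z = ∑' n : ℕ, (z ^ n / (Real.sqrt (Nat.factorial n) : ℂ)) • b n) :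
    LinearIndependent ℂ ε ∧
    ∃ x ∈ Submodule.span ℂ (ε '' {z : ℂ | z ≠ 0}),
      ⟪b 0, x⟫_ℂ • b 0 ∉ Submodule.span ℂ (ε '' {z : ℂ | z ≠ 0}) := by
  have hcoord (z : ℂ) (n : ℕ) : ⟪b n, ε z⟫_ℂ = z ^ n / (Real.sqrt n.factorial : ℂ) := by
    rw [hε]
    exact b.inner_tsum_smul (memℓp_two_pow_div_sqrt_factorial z) n
  have hli : LinearIndependent ℂ ε := by
    refine .of_comp (LinearMap.pi fun n => innerₛₗ ℂ (b n)) ?_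
    have hcomp : (LinearMap.pi fun n => innerₛₗ ℂ (b n)) ∘ ε
        = fun z n => z ^ n / (Real.sqrt n.factorial : ℂ) := by
      ext z n
      exact hcoord z n
    rw [hcomp]
    exact linearIndependent_pow_div fun n => by simp [Nat.factorial_ne_zero]
  have hvacuum : ε 0 = b 0 := by
    rw [hε, tsum_eq_single 0 fun n hn => by simp [zero_pow hn]]
    simp
  refine ⟨hli, ε 1, Submodule.subset_span ⟨1, one_ne_zero, rfl⟩, ?_⟩
  rw [hcoord, pow_zero, Nat.factorial_zero, Nat.cast_one, Real.sqrt_one, Complex.ofReal_one,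
    div_one, one_smul, ← hvacuum]
  exact hli.notMem_span_image (by simp)

/-- In the completed one-mode full Fock space (a Hilbert space `F`
with Hilbert basis `(e_n)_{n ∈ ℕ}`), the exponential vectors
`ε(z) = ∑ₙ (zⁿ/√(n!)) eₙ` form a linearly independent family.  Consequently, for the
(dense pre-Hilbert) subspace `H := span{ε(z) : z ≠ 0}`, the rank-one projection
`Ω Ω* : x ↦ ⟪Ω, x⟫ Ω` onto `ℂΩ` (where `Ω = e₀ = ε(0)`) does not map `H` into `H`;
it is a weak projection on `H` that is not a projection of `H`. -/
theorem expVec_linearIndependent_and_vacuum_proj_not_invariant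
    {F : Type*} [NormedAddCommGroup F] [InnerProductSpace ℂ F] [CompleteSpace F]
    (b : HilbertBasis ℕ ℂ F)
    (ε : ℂ → F)
    (hε : ∀ z : ℂ, ε z = ∑' n : ℕ, (z ^ n / (Real.sqrt (Nat.factorial n) : ℂ)) • b n) :
    LinearIndependent ℂ ε ∧
    ∃ x ∈ Submodule.span ℂ (ε '' {z : ℂ | z ≠ 0}),
      ⟪b 0, x⟫_ℂ • b 0 ∉ Submodule.span ℂ (ε '' {z : ℂ | z ≠ 0}) :=
  expVec_linearIndependent_and_vacuum_proj_not_invariant_general b ε hε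
end

section
/- Let H = L²[0,1] and define on the full Fock space F(H) the positive Fock operator L with L_1 = multiplication by t on H, L_2 = id on H ⊗ H, and L_n = 0 for n ≥ 3. Then L is bounded, but for every nonzero x ∈ H the corresponding creation operator a*(x) on the induced interacting Fock space is unbounded: with y_n := 1_{[0,1/n]}, the quotient ‖a*(x) y_n‖_I / ‖y_n‖_I = ‖x‖ √(2n) → ∞. -/
open MeasureTheory
open scoped InnerProductSpace

/-!
Multiplication by `t` on `L²[0,1]` has norm at most `1` because `0 ≤ t ≤ 1`. Its quadratic form is
`⟪y, L₁ y⟫ = ∫ t |y t|² dt`, so for `y = 1_{(0,b]}` one has `‖y‖² = b` but `⟪y, L₁ y⟫ = b² / 2`;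
a bound `c ‖y‖ ≤ C √⟪y, L₁ y⟫` would make `√b = O(b)` as `b → 0`.
-/

lemma Lp.norm_le_of_ae_eq_mul {α : Type*} [MeasurableSpace α] {μ : Measure α} {p : ENNReal}
    {φ : α → ℂ} {K : ℝ} (hφ : ∀ᵐ t ∂μ, ‖φ t‖ ≤ K) {f g : Lp ℂ p μ}
    (hg : g =ᵐ[μ] fun t => φ t * f t) : ‖g‖ ≤ K * ‖f‖ := by
  refine Lp.norm_le_mul_norm_of_ae_le_mul ?_
  filter_upwards [hφ, hg] with t hφt hgt
  rw [hgt, norm_mul]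
  exact mul_le_mul_of_nonneg_right hφt (norm_nonneg _)

lemma re_inner_eq_integral_mul_norm_sq {μ : Measure ℝ} {f g : Lp ℂ 2 μ}
    (hg : g =ᵐ[μ] fun t => (t : ℂ) * f t) :
    (⟪f, g⟫_ℂ).re = ∫ t, t * ‖f t‖ ^ 2 ∂μ := by
  rw [L2.inner_def, show ∀ z : ℂ, z.re = RCLike.re z from fun _ => rfl,
    ← integral_re (L2.integrable_inner f g)]
  refine integral_congr_ae ?_
  filter_upwards [hg] with t ht
  rw [ht, ← smul_eq_mul, inner_smul_right, inner_self_eq_norm_sq_to_K]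
  exact (Complex.re_ofReal_mul t _).trans (by norm_cast)

lemma not_exists_forall_mul_sqrt_le_mul {c : ℝ} (hc : 0 < c) :
    ¬ ∃ K : ℝ, ∀ b ∈ Set.Ioc (0 : ℝ) 1, c * √b ≤ K * b := by
  rintro ⟨K, hK⟩
  have hK0 : 0 < K := hc.trans_le (by simpa using hK 1 ⟨one_pos, le_rfl⟩)
  set b := min 1 ((c / (2 * K)) ^ 2)
  have hb0 : 0 < b := by positivity
  have hsqrt : √b ≤ c / (2 * K) := Real.sqrt_le_iff.mpr ⟨by positivity, min_le_right _ _⟩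
  have hle : K * b ≤ c / 2 * √b :=
    calc K * b = K * √b * √b := by rw [mul_assoc, Real.mul_self_sqrt hb0.le]
      _ ≤ K * (c / (2 * K)) * √b := by gcongr
      _ = c / 2 * √b := by field_simp
  have := hK b ⟨hb0, min_le_left _ _⟩
  nlinarith [Real.sqrt_pos.mpr hb0]

local notation "μ₁" => volume.restrict (Set.Icc (0 : ℝ) 1)

noncomputable def indicatorIocZero (b : ℝ) : Lp ℂ 2 μ₁ :=
  indicatorConstLp 2 measurableSet_Ioc (measure_ne_top μ₁ (Set.Ioc 0 b)) 1

lemma norm_indicatorIocZero {b : ℝ} (hb0 : 0 ≤ b) (hb1 : b ≤ 1) : ‖indicatorIocZero b‖ = √b := by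
  have hsub : Set.Ioc 0 b ⊆ Set.Icc 0 1 :=
    Set.Ioc_subset_Icc_self.trans (Set.Icc_subset_Icc_right hb1)
  rw [indicatorIocZero, norm_indicatorConstLp two_ne_zero ENNReal.ofNat_ne_top, measureReal_def,
    Measure.restrict_apply measurableSet_Ioc, Set.inter_eq_left.mpr hsub,
    Real.volume_Ioc, sub_zero, ENNReal.toReal_ofReal hb0, Real.sqrt_eq_rpow]
  norm_num

lemma integral_mul_norm_sq_indicatorIocZero {b : ℝ} (hb0 : 0 ≤ b) (hb1 : b ≤ 1) :
    ∫ t, t * ‖indicatorIocZero b t‖ ^ 2 ∂μ₁ = b ^ 2 / 2 := by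
  have hsub : Set.Ioc 0 b ⊆ Set.Icc 0 1 :=
    Set.Ioc_subset_Icc_self.trans (Set.Icc_subset_Icc_right hb1)
  have hf : (fun t => t * ‖indicatorIocZero b t‖ ^ 2) =ᵐ[μ₁] (Set.Ioc 0 b).indicator id := by
    unfold indicatorIocZero
    filter_upwards [indicatorConstLp_coeFn (p := 2) (μ := μ₁) (hs := measurableSet_Ioc)
      (hμs := measure_ne_top μ₁ (Set.Ioc 0 b)) (c := (1 : ℂ))] with t ht
    by_cases hts : t ∈ Set.Ioc 0 b <;> simp [ht, hts]
  rw [integral_congr_ae hf, integral_indicator measurableSet_Ioc,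
    Measure.restrict_restrict measurableSet_Ioc, Set.inter_eq_left.mpr hsub,
    ← intervalIntegral.integral_of_le hb0]
  simp

/-- Let `H = L²[0,1]` and let `L₁` be the (1-particle component of the)
positive Fock operator `L` given by multiplication with `t` (the other components being
`L₂ = id` and `Lₙ = 0`, `n ≥ 3`, which are trivially bounded).  Then `L₁` (hence `L`) is
bounded, but for every `x ≠ 0` the creation operator `a*(x)` of the induced interacting
Fock space is unbounded: since `‖a*(x) y‖_I = ‖x‖·‖y‖_{L²}` (as `L₂ = id`) and
`‖y‖_I² = re ⟪y, L₁ y⟫ = ∫ t |y(t)|² dt`, there is no constant `C` with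
`‖x‖·‖y‖ ≤ C·‖y‖_I` for all `y` (witnessed by `y_n = 1_{[0,1/n]}`, for which the quotient
is `‖x‖ √(2n) → ∞`). -/
theorem bounded_L_unbounded_creators
    (L₁ : Lp ℂ 2 (volume.restrict (Set.Icc (0:ℝ) 1)) →ₗ[ℂ]
          Lp ℂ 2 (volume.restrict (Set.Icc (0:ℝ) 1)))
    (hL₁ : ∀ f : Lp ℂ 2 (volume.restrict (Set.Icc (0:ℝ) 1)),
      (L₁ f : ℝ → ℂ) =ᵐ[volume.restrict (Set.Icc (0:ℝ) 1)] fun t => (t : ℂ) * f t) :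
    (∃ C : ℝ, ∀ f, ‖L₁ f‖ ≤ C * ‖f‖) ∧
    (∀ c : ℝ, 0 < c →
      ¬ ∃ C : ℝ, ∀ f : Lp ℂ 2 (volume.restrict (Set.Icc (0:ℝ) 1)),
        c * ‖f‖ ≤ C * Real.sqrt (⟪f, L₁ f⟫_ℂ).re) := by
  refine ⟨⟨1, fun f => Lp.norm_le_of_ae_eq_mul ?_ (hL₁ f)⟩, ?_⟩
  · filter_upwards [ae_restrict_mem measurableSet_Icc] with t ht
    rw [Complex.norm_real, Real.norm_of_nonneg ht.1]
    exact ht.2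
  · rintro c hc ⟨C, hC⟩
    refine not_exists_forall_mul_sqrt_le_mul hc ⟨C / √2, fun b ⟨hb0, hb1⟩ => ?_⟩
    have hform : √(⟪indicatorIocZero b, L₁ (indicatorIocZero b)⟫_ℂ).re = b / √2 := by
      rw [re_inner_eq_integral_mul_norm_sq (hL₁ _),
        integral_mul_norm_sq_indicatorIocZero hb0.le hb1, Real.sqrt_div' _ zero_le_two,
        Real.sqrt_sq hb0.le]
    calc c * √b = c * ‖indicatorIocZero b‖ := by rw [norm_indicatorIocZero hb0.le hb1]
      _ ≤ C * √(⟪indicatorIocZero b, L₁ (indicatorIocZero b)⟫_ℂ).re := hC _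
      _ = C / √2 * b := by rw [hform]; ring
end

section
/- Let H = ⊕_{n∈ℕ} ℂⁿ (Hilbert space direct sum). For each n let eⁿ := Σ_{i=1}^n (e_i ⊗ e_i)/√n ∈ ℂⁿ ⊗ ℂⁿ, a unit vector, and p_n := eⁿ(eⁿ)*. Define L_2 := ⊕_{n} n·p_n on ⊕_n ℂⁿ⊗ℂⁿ ⊆ H ⊗ H. Then L_2 is an unbounded positive operator, yet for every x = ⊕_n xⁿ ∈ H one has (x ⊗ id_H)* L_2 (x ⊗ id_H) ≤ ‖x‖² id_H. -/
/-!
The block `n pₙ` is `n` times the projection onto a unit vector, hence positive of norm `n`.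
For the bound, the `n`-th term `|∑ᵢ xⁿᵢ yⁿᵢ|²` is at most `‖xⁿ‖² ‖yⁿ‖² ≤ ‖xⁿ‖² ‖y‖²` by
Cauchy–Schwarz, and summing over `n` gives `‖x‖² ‖y‖²`.
-/

open scoped InnerProductSpace ComplexOrder

section RankOne

variable {F : Type*} [NormedAddCommGroup F] [InnerProductSpace ℂ F]

theorem inner_smul_inner_smul_self_nonneg {c : ℂ} (hc : 0 ≤ c) (e x : F) :
    0 ≤ ⟪x, c • (⟪e, x⟫_ℂ • e)⟫_ℂ := by
  rw [inner_smul_right, inner_smul_right, ← inner_conj_symm x e, Complex.mul_conj]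
  exact mul_nonneg hc (by exact_mod_cast Complex.normSq_nonneg _)

theorem norm_smul_inner_self_smul_of_norm_eq_one {e : F} (he : ‖e‖ = 1) (c : ℂ) :
    ‖c • (⟪e, e⟫_ℂ • e)‖ = ‖c‖ := by
  rw [inner_self_eq_norm_sq_to_K, he]
  simp [norm_smul, he]

end RankOne

theorem EuclideanSpace.norm_diag_inv_sqrt (n : ℕ) [NeZero n]
    (v : EuclideanSpace ℂ (Fin n × Fin n))
    (hv : ∀ p : Fin n × Fin n, v p = if p.1 = p.2 then ((Real.sqrt n : ℝ) : ℂ)⁻¹ else 0) :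
    ‖v‖ = 1 := by
  have hsq : ∀ p : Fin n × Fin n, ‖v p‖ ^ 2 = if p.1 = p.2 then (n : ℝ)⁻¹ else 0 := by
    intro p
    rw [hv p]
    split_ifs
    · rw [norm_inv, Complex.norm_real, Real.norm_eq_abs, abs_of_nonneg (Real.sqrt_nonneg _),
        inv_pow, Real.sq_sqrt n.cast_nonneg]
    · simp
  rw [EuclideanSpace.norm_eq, Real.sqrt_eq_one, Fintype.sum_prod_type]
  simp [hsq, NeZero.ne]

theorem EuclideanSpace.norm_sum_mul_sq_le {ι : Type*} [Fintype ι] (x y : EuclideanSpace ℂ ι) :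
    ‖∑ i, x i * y i‖ ^ 2 ≤ ‖x‖ ^ 2 * ‖y‖ ^ 2 := by
  rw [EuclideanSpace.norm_sq_eq, EuclideanSpace.norm_sq_eq]
  calc ‖∑ i, x i * y i‖ ^ 2 ≤ (∑ i, ‖x i‖ * ‖y i‖) ^ 2 := by
        gcongr
        exact (norm_sum_le _ _).trans_eq (by simp only [norm_mul])
    _ ≤ (∑ i, ‖x i‖ ^ 2) * ∑ i, ‖y i‖ ^ 2 := Finset.sum_mul_sq_le_sq_mul_sq _ _ _

namespace lp

variable {ι : Type*} {E F : ι → Type*} [∀ i, NormedAddCommGroup (E i)]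
  [∀ i, NormedAddCommGroup (F i)]

theorem hasSum_norm_sq (x : lp E 2) : HasSum (fun i => ‖x i‖ ^ 2) (‖x‖ ^ 2) := by
  simpa using lp.hasSum_norm (p := 2) (by norm_num) x

theorem tsum_le_norm_sq_mul_norm_sq (x : lp E 2) (y : lp F 2) {f : ι → ℝ}
    (hf₀ : ∀ i, 0 ≤ f i) (hf : ∀ i, f i ≤ ‖x i‖ ^ 2 * ‖y i‖ ^ 2) :
    ∑' i, f i ≤ ‖x‖ ^ 2 * ‖y‖ ^ 2 := by
  have hdom : ∀ i, f i ≤ ‖x i‖ ^ 2 * ‖y‖ ^ 2 := fun i =>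
    (hf i).trans (by gcongr; exact lp.norm_apply_le_norm two_ne_zero y i)
  have hsum := (hasSum_norm_sq x).mul_right (‖y‖ ^ 2)
  exact hasSum_le hdom (hsum.summable.of_nonneg_of_le hf₀ hdom).hasSum hsum

end lp

/-- Let `H = ⊕ₙ ℂⁿ` (Hilbert-space direct sum).  For each `n`, let
`eⁿ = ∑ᵢ (eᵢ ⊗ eᵢ)/√n` be the maximally entangled unit vector in
`ℂⁿ ⊗ ℂⁿ ≅ EuclideanSpace ℂ (Fin n × Fin n)`, `pₙ = eⁿ(eⁿ)*` the rank-one projection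
onto it, and `L₂ = ⊕ₙ n·pₙ` on `⊕ₙ ℂⁿ⊗ℂⁿ ⊆ H ⊗ H`.  Then `L₂` is positive and
unbounded, yet `(x ⊗ id)* L₂ (x ⊗ id) ≤ ‖x‖² id_H` for every `x ∈ H`; blockwise, using
`⟨xⁿ⊗yⁿ, n pₙ (xⁿ⊗yⁿ)⟩ = |∑ᵢ xⁿᵢ yⁿᵢ|²`, this reads
`∑ₙ |∑ᵢ xⁿᵢ yⁿᵢ|² ≤ ‖x‖²‖y‖²` for all `y ∈ H`. -/
theorem unbounded_L_bounded_creator_map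
    (E : ∀ n : ℕ+, EuclideanSpace ℂ (Fin n × Fin n))
    (hE : ∀ (n : ℕ+) (p : Fin n × Fin n),
      E n p = if p.1 = p.2 then ((Real.sqrt n : ℝ) : ℂ)⁻¹ else 0) :
    -- `L₂` is positive:
    (∀ (n : ℕ+) (X : EuclideanSpace ℂ (Fin n × Fin n)),
      0 ≤ ⟪X, (n : ℂ) • (⟪E n, X⟫_ℂ • E n)⟫_ℂ) ∧
    -- `L₂` is unbounded (its `n`-th block `n pₙ` has norm `n`):
    (∀ C : ℝ, ∃ (n : ℕ+) (X : EuclideanSpace ℂ (Fin n × Fin n)),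
      ‖X‖ = 1 ∧ C < ‖(n : ℂ) • (⟪E n, X⟫_ℂ • E n)‖) ∧
    -- `(x ⊗ id)* L₂ (x ⊗ id) ≤ ‖x‖² id_H`:
    (∀ x y : lp (fun n : ℕ+ => EuclideanSpace ℂ (Fin n)) 2,
      ∑' n : ℕ+, ‖∑ i, x n i * y n i‖ ^ 2 ≤ ‖x‖ ^ 2 * ‖y‖ ^ 2) := by
  have hE_norm (n : ℕ+) : ‖E n‖ = 1 := EuclideanSpace.norm_diag_inv_sqrt n (E n) (hE n)
  refine ⟨fun n X => inner_smul_inner_smul_self_nonneg (Nat.cast_nonneg _) _ _, ?_, ?_⟩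
  · intro C
    obtain ⟨m, hm⟩ := exists_nat_gt C
    refine ⟨m.succPNat, E _, hE_norm _, ?_⟩
    rw [norm_smul_inner_self_smul_of_norm_eq_one (hE_norm _), Complex.norm_natCast,
      Nat.succPNat_coe, Nat.cast_succ]
    linarith
  · exact fun x y => lp.tsum_le_norm_sq_mul_norm_sq x y (fun _ => by positivity)
      fun n => EuclideanSpace.norm_sum_mul_sq_le (x n) (y n)
end

section
/- In the one-mode interacting Fock space setting: let μ be a nonzero symmetric finite measure on ℝ with finite moments of all orders, (P_n)_{n≥0} its monic orthogonal polynomials with three-term recursion t P_n = P_{n+1} + k_n P_{n−1} (P_0 = 1, P_1 = t, k_n ≥ 0). Then ∫ P_m P_n dμ = δ_{m,n} ℓ_n where ℓ_n = k_n ⋯ k_1 · ℓ_0 with ℓ_0 = μ(ℝ), and the map e_n ↦ P_n extends to an isometry from the one-mode interacting Fock space with weights ℓ_n into L²(μ), under which a* + a acts as multiplication by t on span{P_n}. -/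
open MeasureTheory Polynomial

/-!
Reading the recursion `X P_n = P_{n+1} + k_n P_{n-1}` against `P_m` and using orthogonality to
discard all off-diagonal terms gives
`∫ P_{m+1}² = ∫ P_{m+1} · (t P_m) = ∫ P_m · (t P_{m+1}) = k_{m+1} ∫ P_m²`,
so the squared norms are `k_n ⋯ k_1 · ∫ P_0² = k_n ⋯ k_1 · μ(ℝ)`.
-/

namespace Polynomial

variable {μ : Measure ℝ}

theorem integrable_eval (hpow : ∀ n : ℕ, Integrable (fun t : ℝ => t ^ n) μ) (p : ℝ[X]) :
    Integrable (fun t => p.eval t) μ := by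
  simp_rw [eval_eq_sum_range]
  exact integrable_finsetSum _ fun i _ => (hpow i).const_mul _

theorem integral_eval_mul_eval_add_C_mul
    (hint : ∀ p : ℝ[X], Integrable (fun t => p.eval t) μ) (p q r : ℝ[X]) (c : ℝ) :
    ∫ t, p.eval t * (q + C c * r).eval t ∂μ =
      ∫ t, p.eval t * q.eval t ∂μ + c * ∫ t, p.eval t * r.eval t ∂μ := by
  have hpq : Integrable (fun t => p.eval t * q.eval t) μ := by simpa using hint (p * q)
  have hpr : Integrable (fun t => c * (p.eval t * r.eval t)) μ := by
    simpa [mul_assoc] using hint (C c * (p * r))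
  rw [← integral_const_mul, ← integral_add hpq hpr]
  congr 1 with t
  simp only [eval_add, eval_mul, eval_C]
  ring

variable {P : ℕ → ℝ[X]} {k : ℕ → ℝ}

theorem integral_eval_mul_self_succ
    (hint : ∀ p : ℝ[X], Integrable (fun t => p.eval t) μ)
    (hrec : ∀ n : ℕ, 1 ≤ n → X * P n = P (n + 1) + C (k n) * P (n - 1))
    (horth : ∀ m n : ℕ, m ≠ n → ∫ t, (P m).eval t * (P n).eval t ∂μ = 0)
    (hP0 : P 0 = 1) (hP1 : P 1 = X) (m : ℕ) :
    ∫ t, (P (m + 1)).eval t * (P (m + 1)).eval t ∂μ =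
      k (m + 1) * ∫ t, (P m).eval t * (P m).eval t ∂μ := by
  have hleft : ∫ t, (P m).eval t * (X * P (m + 1)).eval t ∂μ =
      k (m + 1) * ∫ t, (P m).eval t * (P m).eval t ∂μ := by
    rw [hrec (m + 1) (by omega), Nat.add_sub_cancel, integral_eval_mul_eval_add_C_mul hint,
      horth m (m + 2) (by omega), zero_add]
  have hright : ∫ t, (P (m + 1)).eval t * (X * P m).eval t ∂μ =
      ∫ t, (P (m + 1)).eval t * (P (m + 1)).eval t ∂μ := by
    rcases m with _ | m
    · simp [hP0, hP1]
    · rw [hrec (m + 1) (by omega), Nat.add_sub_cancel, integral_eval_mul_eval_add_C_mul hint,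
        horth (m + 2) m (by omega), mul_zero, add_zero]
  rw [← hright, ← hleft]
  congr 1 with t
  simp only [eval_mul, eval_X]
  ring

theorem integral_eval_mul_self
    (hint : ∀ p : ℝ[X], Integrable (fun t => p.eval t) μ)
    (hrec : ∀ n : ℕ, 1 ≤ n → X * P n = P (n + 1) + C (k n) * P (n - 1))
    (horth : ∀ m n : ℕ, m ≠ n → ∫ t, (P m).eval t * (P n).eval t ∂μ = 0)
    (hP0 : P 0 = 1) (hP1 : P 1 = X) (n : ℕ) :
    ∫ t, (P n).eval t * (P n).eval t ∂μ =
      (∏ i ∈ Finset.Icc 1 n, k i) * (μ Set.univ).toReal := by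
  induction n with
  | zero => simp [hP0, Measure.real]
  | succ n ih =>
    rw [integral_eval_mul_self_succ hint hrec horth hP0 hP1, ih,
      Finset.prod_Icc_succ_top (Nat.le_add_left 1 n)]
    ring

end Polynomial

theorem one_mode_orthogonal_polynomials_general
    (μ : Measure ℝ)
    (hmom : ∀ n : ℕ, Integrable (fun t : ℝ => |t| ^ n) μ)
    (P : ℕ → Polynomial ℝ)
    (hP0 : P 0 = 1) (hP1 : P 1 = X)
    (k : ℕ → ℝ)
    (hrec : ∀ n : ℕ, 1 ≤ n → X * P n = P (n + 1) + C (k n) * P (n - 1))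
    (horth : ∀ m n : ℕ, m ≠ n → ∫ t, (P m).eval t * (P n).eval t ∂μ = 0) :
    (∀ m n : ℕ, ∫ t, (P m).eval t * (P n).eval t ∂μ =
      if m = n then (∏ i ∈ Finset.Icc 1 n, k i) * (μ Set.univ).toReal else 0) ∧
    (∀ n : ℕ, 1 ≤ n → ∀ t : ℝ,
      (P (n + 1)).eval t + k n * (P (n - 1)).eval t = t * (P n).eval t) := by
  have hpow (n : ℕ) : Integrable (fun t : ℝ => t ^ n) μ :=
    (integrable_norm_iff (by fun_prop)).1 (by simpa [abs_pow] using hmom n)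
  refine ⟨fun m n => ?_, fun n hn t => by simpa using (congrArg (eval t) (hrec n hn)).symm⟩
  split_ifs with hmn
  · subst hmn
    exact integral_eval_mul_self (integrable_eval hpow) hrec horth hP0 hP1 m
  · exact horth m n hmn

/-- Let `μ` be a nonzero symmetric finite measure on `ℝ` with finite
moments of all orders, and `(P_n)` its monic orthogonal polynomials (`deg P_n = n`,
`P_0 = 1`, `P_1 = X`) with the three-term recursion `t·P_n = P_{n+1} + k_n P_{n-1}`
(`k_n ≥ 0`, `n ≥ 1`).  Then `∫ P_m P_n dμ = δ_{m,n} ℓ_n` where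
`ℓ_n = k_n ⋯ k_1 · ℓ_0` and `ℓ_0 = μ(ℝ)`.  Hence `e_n ↦ P_n` extends to an isometry
from the one-mode interacting Fock space with weights `ℓ_n` (where
`⟨e_m, e_n⟩ = δ_{m,n} ℓ_n`) into `L²(μ)`, under which `a* + a` (with `a* e_n = e_{n+1}`,
`a e_n = k_n e_{n-1}`) acts as multiplication by `t` on `span{P_n}`:
`(a* + a) e_n ↦ P_{n+1} + k_n P_{n-1} = t·P_n`. -/
theorem one_mode_orthogonal_polynomials
    (μ : Measure ℝ) [IsFiniteMeasure μ] (hμ : μ ≠ 0)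
    (hsymm : Measure.map (fun t : ℝ => -t) μ = μ)
    (hmom : ∀ n : ℕ, Integrable (fun t : ℝ => |t| ^ n) μ)
    (P : ℕ → Polynomial ℝ)
    (hmonic : ∀ n, (P n).Monic) (hdeg : ∀ n, (P n).natDegree = n)
    (hP0 : P 0 = 1) (hP1 : P 1 = X)
    (k : ℕ → ℝ) (hk : ∀ n, 0 ≤ k n)
    (hrec : ∀ n : ℕ, 1 ≤ n → X * P n = P (n + 1) + C (k n) * P (n - 1))
    (horth : ∀ m n : ℕ, m ≠ n → ∫ t, (P m).eval t * (P n).eval t ∂μ = 0) :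
    (∀ m n : ℕ, ∫ t, (P m).eval t * (P n).eval t ∂μ =
      if m = n then (∏ i ∈ Finset.Icc 1 n, k i) * (μ Set.univ).toReal else 0) ∧
    (∀ n : ℕ, 1 ≤ n → ∀ t : ℝ,
      (P (n + 1)).eval t + k n * (P (n - 1)).eval t = t * (P n).eval t) :=
  one_mode_orthogonal_polynomials_general μ hmom P hP0 hP1 k hrec horth
end

section
/- Let I = ⊕_{n≥0} ℂΩ_n (orthonormal vectors Ω_n, Ω_0 = Ω) and let A* = L_{(1)}(I) be the space of all degree-one linear maps on I. Suppose a*: H → A* is a surjective linear map from a pre-Hilbert space H. Then the map Λ : F(H) → I determined by Λ(x_n ⊗ ⋯ ⊗ x_1) = a*(x_n)⋯a*(x_1)Ω has no weak adjoint: there is no map Λ* : I → F(H)‾ with ⟨ΛX, Y⟩ = ⟨X, Λ*Y⟩ for all X ∈ F(H), Y ∈ I. -/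
open scoped InnerProductSpace

/-!
If `Λ` had a weak adjoint `Λ*`, then `‖⟪Λ (x ⊗ ⋯ ⊗ x), Ωₙ⟫‖ ≤ ‖x‖ⁿ ‖Λ* Ωₙ‖` for every `x ∈ H`.
Surjectivity of `a*` makes every weighted shift of the basis `(Ωₙ)` an `a*(x)`, and then
`⟪Λ (x ⊗ ⋯ ⊗ x), Ωₙ⟫` is the product of the first `n` weights. Choosing the weights so that this
product grows like `nⁿ ‖Λ* Ωₙ‖` defeats every geometric bound `‖x‖ⁿ ‖Λ* Ωₙ‖`.
-/

open Finset

section WeightedShift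

variable {R M : Type*} [CommRing R] [AddCommGroup M] [Module R M]

theorem exists_weightedShift {v : ℕ → M} (hli : LinearIndependent R v)
    (hspan : Submodule.span R (Set.range v) = ⊤) (w : ℕ → R) :
    ∃ c : M →ₗ[R] M, ∀ n, c (v n) = w n • v (n + 1) := by
  let b := Module.Basis.mk hli hspan.ge
  refine ⟨b.constr R fun n => w n • v (n + 1), fun n => ?_⟩
  simpa only [b, Module.Basis.mk_apply] using b.constr_basis R (fun n => w n • v (n + 1)) n

end WeightedShift

section FockSpace

variable {𝕜 H F I : Type*} [RCLike 𝕜]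

theorem norm_eq_prod_norm_of_inner_self_eq_prod [NormedAddCommGroup H] [InnerProductSpace 𝕜 H]
    [NormedAddCommGroup F] [InnerProductSpace 𝕜 F] {ι : Type*} [Fintype ι] {u : F} {x : ι → H}
    (h : ⟪u, u⟫_𝕜 = ∏ i, ⟪x i, x i⟫_𝕜) : ‖u‖ = ∏ i, ‖x i‖ := by
  simp only [inner_self_eq_norm_sq_to_K (𝕜 := 𝕜)] at h
  have hsq : ‖u‖ ^ 2 = (∏ i, ‖x i‖) ^ 2 := by
    rw [← prod_pow]; exact_mod_cast h
  exact (pow_left_inj₀ (norm_nonneg _) (prod_nonneg fun i _ => norm_nonneg _) two_ne_zero).mp hsq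

theorem apply_const_eq_prod_smul [AddCommGroup I] [Module 𝕜 I] (Ω : ℕ → I)
    (astar : H → I →ₗ[𝕜] I) (τ : ∀ n : ℕ, (Fin n → H) → F) (Λ : F → I)
    (hΛ0 : Λ (τ 0 (fun i => i.elim0)) = Ω 0)
    (hΛrec : ∀ (n : ℕ) (x : Fin (n + 1) → H),
      Λ (τ (n + 1) x) = astar (x 0) (Λ (τ n (fun i => x i.succ))))
    {x : H} {w : ℕ → 𝕜} (hx : ∀ n, astar x (Ω n) = w n • Ω (n + 1)) (n : ℕ) :
    Λ (τ n fun _ => x) = (∏ i ∈ range n, w i) • Ω n := by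
  induction n with
  | zero => simpa [Subsingleton.elim (fun _ : Fin 0 => x) (fun i => i.elim0)] using hΛ0
  | succ n ih => rw [hΛrec, ih, map_smul, hx, smul_smul, prod_range_succ, mul_comm]

theorem norm_inner_le_of_weak_adjoint {Fb : Type*} [SeminormedAddCommGroup I]
    [InnerProductSpace 𝕜 I] [SeminormedAddCommGroup F] [InnerProductSpace 𝕜 F]
    [SeminormedAddCommGroup Fb] [InnerProductSpace 𝕜 Fb] {Λ : F → I} {ιF : F →ₗᵢ[𝕜] Fb}
    {Λs : I → Fb} (hΛs : ∀ X Y, ⟪Λ X, Y⟫_𝕜 = ⟪ιF X, Λs Y⟫_𝕜) (X : F) (Y : I) :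
    ‖⟪Λ X, Y⟫_𝕜‖ ≤ ‖X‖ * ‖Λs Y‖ := by
  simpa only [hΛs, ιF.norm_map] using norm_inner_le_norm (𝕜 := 𝕜) (ιF X) (Λs Y)

end FockSpace

theorem exists_mul_pow_le_pow_self (C : ℝ) {r : ℝ} (hr : 0 ≤ r) :
    ∃ n : ℕ, C * r ^ n ≤ (n : ℝ) ^ n := by
  obtain ⟨n, hn⟩ := exists_nat_ge (max (C * r) r)
  have hCr : C * r ≤ n + 1 := by linarith [le_max_left (C * r) r]
  have hrn : r ^ n ≤ ((n : ℝ) + 1) ^ n :=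
    pow_le_pow_left₀ hr (by linarith [le_max_right (C * r) r]) n
  refine ⟨n + 1, ?_⟩
  calc C * r ^ (n + 1) = C * r * r ^ n := by ring
    _ ≤ (n + 1) * ((n : ℝ) + 1) ^ n :=
      mul_le_mul hCr hrn (pow_nonneg hr n) (by positivity)
    _ = ((n + 1 : ℕ) : ℝ) ^ (n + 1) := by push_cast; ring

theorem full_interacting_Fock_not_regular_general
    {I : Type*} [NormedAddCommGroup I] [InnerProductSpace ℂ I]
    (Ω : ℕ → I) (hΩ : Orthonormal ℂ Ω)
    (hspanI : Submodule.span ℂ (Set.range Ω) = ⊤)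
    {H : Type*} [NormedAddCommGroup H] [InnerProductSpace ℂ H]
    (astar : H →ₗ[ℂ] (I →ₗ[ℂ] I))
    (hsurj : ∀ c : I →ₗ[ℂ] I,
      (∀ n : ℕ, ∃ z : ℂ, c (Ω n) = z • Ω (n + 1)) → ∃ x : H, astar x = c)
    {F : Type*} [NormedAddCommGroup F] [InnerProductSpace ℂ F]
    (τ : ∀ n : ℕ, (Fin n → H) → F)
    (hinner : ∀ (n : ℕ) (x y : Fin n → H),
      ⟪τ n x, τ n y⟫_ℂ = ∏ i, ⟪x i, y i⟫_ℂ)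
    (Λ : F →ₗ[ℂ] I)
    (hΛ0 : Λ (τ 0 (fun i => i.elim0)) = Ω 0)
    (hΛrec : ∀ (n : ℕ) (x : Fin (n + 1) → H),
      Λ (τ (n + 1) x) = astar (x 0) (Λ (τ n (fun i => x i.succ))))
    {Fb : Type*} [NormedAddCommGroup Fb] [InnerProductSpace ℂ Fb]
    (ιF : F →ₗᵢ[ℂ] Fb) :
    ¬ ∃ Λs : I →ₗ[ℂ] Fb, ∀ (X : F) (Y : I), ⟪Λ X, Y⟫_ℂ = ⟪ιF X, Λs Y⟫_ℂ := by
  rintro ⟨Λs, hΛs⟩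
  set q : ℕ → ℝ := fun n => (n : ℝ) ^ n * ‖Λs (Ω n)‖ + 1
  have hq : ∀ n, 0 < q n := fun n => by positivity
  obtain ⟨c, hc⟩ := exists_weightedShift hΩ.linearIndependent hspanI
    fun n => ((q (n + 1) / q n : ℝ) : ℂ)
  obtain ⟨x, rfl⟩ := hsurj c fun n => ⟨_, hc n⟩
  have hprod (n : ℕ) : ∏ i ∈ range n, ((q (i + 1) / q i : ℝ) : ℂ) = ((q n / q 0 : ℝ) : ℂ) :=
    prod_range_induction (fun i => ((q (i + 1) / q i : ℝ) : ℂ)) (fun n => ((q n / q 0 : ℝ) : ℂ))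
      (by simp [(hq 0).ne']) n fun k _ => by
      rw [← Complex.ofReal_mul]; congr 1; field_simp [(hq 0).ne', (hq k).ne']
  have hbound (n : ℕ) : q n / q 0 ≤ ‖x‖ ^ n * ‖Λs (Ω n)‖ := by
    have := norm_inner_le_of_weak_adjoint hΛs (τ n fun _ => x) (Ω n)
    rwa [apply_const_eq_prod_smul Ω astar τ Λ hΛ0 hΛrec hc, hprod, inner_smul_left,
      inner_self_eq_one_of_norm_eq_one (hΩ.1 n),
      norm_eq_prod_norm_of_inner_self_eq_prod (hinner _ _ _), Fin.prod_const,
      Complex.conj_ofReal, mul_one, Complex.norm_real,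
      Real.norm_of_nonneg (div_pos (hq n) (hq 0)).le] at this
  obtain ⟨n, hn⟩ := exists_mul_pow_le_pow_self (q 0) (norm_nonneg x)
  have hqn := (div_le_iff₀' (hq 0)).mp (hbound n)
  linarith [mul_le_mul_of_nonneg_right hn (norm_nonneg (Λs (Ω n)))]

/-- Let `I = ⊕ₙ ℂ Ωₙ` be a pre-Hilbert space with orthonormal Hamel
basis `(Ωₙ)_{n≥0}` (`Ω₀ = Ω` the vacuum), and let `A* = L₍₁₎(I)` be **all** degree-one
linear maps on `I` (those with `c Ωₙ ∈ ℂ Ω_{n+1}`).  Suppose `a* : H → A*` is a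
surjective linear map from a pre-Hilbert space `H` into the operators on `I`, with range
exactly the degree-one maps.  Let `F = F(H) = ⊕ₙ H^{⊗n}` be the algebraic full Fock
space over `H` (given abstractly by the maps `τ n : (x₁,…,xₙ) ↦ xₙ ⊗ ⋯ ⊗ x₁` with
`⟨τ x, τ y⟩ = ∏ᵢ ⟨xᵢ, yᵢ⟩`, different grades orthogonal, and total), and let
`Λ : F → I` be determined by `Λ(xₙ ⊗ ⋯ ⊗ x₁) = a*(xₙ)⋯a*(x₁)Ω`.  Then `Λ` has no weak
adjoint: there is no linear `Λ* : I → F̄` (with `F̄` the completion of `F`, embedded via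
the dense isometry `ιF`) satisfying `⟨Λ X, Y⟩ = ⟨X, Λ* Y⟩` for all `X ∈ F`, `Y ∈ I`. -/
theorem full_interacting_Fock_not_regular
    {I : Type*} [NormedAddCommGroup I] [InnerProductSpace ℂ I]
    (Ω : ℕ → I) (hΩ : Orthonormal ℂ Ω)
    (hspanI : Submodule.span ℂ (Set.range Ω) = ⊤)
    {H : Type*} [NormedAddCommGroup H] [InnerProductSpace ℂ H]
    (astar : H →ₗ[ℂ] (I →ₗ[ℂ] I))
    (hdeg : ∀ (x : H) (n : ℕ), ∃ z : ℂ, astar x (Ω n) = z • Ω (n + 1))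
    (hsurj : ∀ c : I →ₗ[ℂ] I,
      (∀ n : ℕ, ∃ z : ℂ, c (Ω n) = z • Ω (n + 1)) → ∃ x : H, astar x = c)
    {F : Type*} [NormedAddCommGroup F] [InnerProductSpace ℂ F]
    (τ : ∀ n : ℕ, (Fin n → H) → F)
    (hinner : ∀ (n : ℕ) (x y : Fin n → H),
      ⟪τ n x, τ n y⟫_ℂ = ∏ i, ⟪x i, y i⟫_ℂ)
    (horth : ∀ (m n : ℕ) (x : Fin m → H) (y : Fin n → H), m ≠ n → ⟪τ m x, τ n y⟫_ℂ = 0)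
    (htotal : Submodule.span ℂ {v : F | ∃ n x, v = τ n x} = ⊤)
    (Λ : F →ₗ[ℂ] I)
    (hΛ0 : Λ (τ 0 (fun i => i.elim0)) = Ω 0)
    (hΛrec : ∀ (n : ℕ) (x : Fin (n + 1) → H),
      Λ (τ (n + 1) x) = astar (x 0) (Λ (τ n (fun i => x i.succ))))
    {Fb : Type*} [NormedAddCommGroup Fb] [InnerProductSpace ℂ Fb] [CompleteSpace Fb]
    (ιF : F →ₗᵢ[ℂ] Fb) (hdense : DenseRange ιF) :
    ¬ ∃ Λs : I →ₗ[ℂ] Fb, ∀ (X : F) (Y : I), ⟪Λ X, Y⟫_ℂ = ⟪ιF X, Λs Y⟫_ℂ :=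
  full_interacting_Fock_not_regular_general Ω hΩ hspanI astar hsurj τ hinner Λ hΛ0 hΛrec ιF
end
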